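/- arXiv:1504.01242 — 2 statements merged into one kernel-verified Lean document; each statement's English description precedes it below -/
import Mathlib

section
/- Let C: f = 0 be a free divisor of degree d which is not a pencil of lines, with exponents d_1 ≤ d_2. Then d_1 and d_2 are the two roots of the quadratic equation t² − (d−1)t + (d−1)² − τ(C) = 0; in particular d = d_1 + d_2 + 1 and τ(C) = (d−1)² − d_1·d_2, so the pairs (d, τ(C)) and (d_1, d_2) determine each other. -/
open MvPolynomial

noncomputable section

/-- The polynomial ring `S = ℂ[x,y,z]`. -/
abbrev S3 : Type := MvPolynomial (Fin 3) ℂ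

/-- The Jacobian ideal of `f`, generated by the three partial derivatives. -/
def jacobianIdeal (f : S3) : Ideal S3 :=
  Ideal.span {pderiv 0 f, pderiv 1 f, pderiv 2 f}

/-- The dimension `m(f)_k` of the degree `k` homogeneous component of the
Milnor algebra `M(f) = S/J_f`. -/
def milnorDim (f : S3) (k : ℕ) : ℕ :=
  Module.finrank ℂ (Submodule.map (Ideal.Quotient.mkₐ ℂ (jacobianIdeal f)).toLinearMap
    (homogeneousSubmodule (Fin 3) ℂ k))

/-- The `S`-linear map `(a,b,c) ↦ a f_x + b f_y + c f_z`. -/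
def relMap (f : S3) : (Fin 3 → S3) →ₗ[S3] S3 where
  toFun ρ := ∑ i, ρ i * pderiv i f
  map_add' a b := by simp [add_mul, Finset.sum_add_distrib]
  map_smul' c a := by simp [Finset.mul_sum, mul_assoc]

/-- The module `AR(f)` of all relations among the partial derivatives of `f`. -/
def AR (f : S3) : Submodule S3 (Fin 3 → S3) := LinearMap.ker (relMap f)

/-- The degree `m` graded piece `AR(f)_m`, as a `ℂ`-subspace of `S³`. -/
def ARgr (f : S3) (m : ℕ) : Submodule ℂ (Fin 3 → S3) :=
  (LinearMap.ker ((relMap f).restrictScalars ℂ)) ⊓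
    Submodule.pi Set.univ (fun _ => homogeneousSubmodule (Fin 3) ℂ m)

/-- `ar(f)_m = dim_ℂ AR(f)_m`. -/
def arDim (f : S3) (m : ℕ) : ℕ := Module.finrank ℂ (ARgr f m)

/-- A vector of polynomials is homogeneous of degree `m` if all components are. -/
def IsHomogVec (ρ : Fin 3 → S3) (m : ℕ) : Prop := ∀ i, (ρ i).IsHomogeneous m

/-- `C : f = 0` is a free divisor with exponents `d₁, d₂` if `AR(f)` is a free
`S`-module with a homogeneous basis in degrees `d₁` and `d₂`. -/
def IsFreeDivisorWith (f : S3) (d₁ d₂ : ℕ) : Prop :=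
  ∃ b : Module.Basis (Fin 2) S3 (AR f),
    IsHomogVec (↑(b 0)) d₁ ∧ IsHomogVec (↑(b 1)) d₂

/-- `C : f = 0` is a free divisor if `AR(f)` is a free graded `S`-module of rank two. -/
def IsFreeDivisor (f : S3) : Prop := ∃ d₁ d₂ : ℕ, IsFreeDivisorWith f d₁ d₂

/-- `binom(a, 2)` for an integer `a`, zero when `a < 2`. -/
def chooseTwo (a : ℤ) : ℤ := (a.toNat).choose 2

/-- The Hilbert function `m(f_s)_k` of the Milnor algebra of a smooth plane curve
of degree `d`. -/
def smoothMilnorDim (d : ℕ) (k : ℤ) : ℤ :=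
  chooseTwo (k + 2) - 3 * chooseTwo (k - d + 3) + 3 * chooseTwo (k - 2 * d + 4)
    - chooseTwo (k - 3 * d + 5)

/-- `m(f)_k` extended to integer indices by zero. -/
def milnorDimZ (f : S3) (k : ℤ) : ℤ := if k < 0 then 0 else milnorDim f k.toNat

/-- `ar(f)_m` extended to integer indices by zero. -/
def arDimZ (f : S3) (m : ℤ) : ℤ := if m < 0 then 0 else arDim f m.toNat

/-- The coincidence threshold `ct(f)`. -/
def ctf (f : S3) (d : ℕ) : ℕ :=
  sSup {q : ℕ | ∀ k ≤ q, (milnorDim f k : ℤ) = smoothMilnorDim d k}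

/-- The stability threshold `st(f)`. -/
def stf (f : S3) (τ : ℕ) : ℕ := sInf {q : ℕ | ∀ k ≥ q, milnorDim f k = τ}

/-- `mdr(f)`, the minimal degree of a syzygy. -/
def mdr (f : S3) : ℕ := sInf {q : ℕ | ARgr f q ≠ ⊥}

/-- The irrelevant maximal ideal `(x,y,z)`. -/
def maxIdeal3 : Ideal S3 := Ideal.span {X 0, X 1, X 2}

/-- The saturation `I_f` of the Jacobian ideal with respect to `(x,y,z)`. -/
def satJacobian (f : S3) : Ideal S3 := ⨆ n : ℕ, (jacobianIdeal f).colon ((maxIdeal3 ^ n : Ideal S3) : Set S3)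

/-!
For `m` large, the exact sequence
`0 → AR(f)_m → S_m³ → S_{m+d-1} → M(f)_{m+d-1} → 0`, together with
`AR(f)_m ≅ S_{m-d₁} ⊕ S_{m-d₂}` coming from a homogeneous basis, writes
`2τ = 2 m(f)_{m+d-1}` as a polynomial in `m` via `2 dim S_n = (n+1)(n+2)`. Its `m²`-coefficient
vanishes and its `m`-coefficient is `2(d - 1 - d₁ - d₂)`, which must vanish because `τ` does not
depend on `m`; the constant term is then `2((d-1)² - d₁d₂)`.
-/

attribute [local instance] MvPolynomial.gradedAlgebra

section LinearAlgebra

variable {K V W : Type*} [DivisionRing K] [AddCommGroup V] [Module K V] [AddCommGroup W]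
  [Module K W]

theorem Submodule.finrank_map_add_finrank_inf_ker (g : V →ₗ[K] W) (P : Submodule K V)
    [FiniteDimensional K P] :
    Module.finrank K (P.map g) + Module.finrank K ↥(P ⊓ LinearMap.ker g) = Module.finrank K P := by
  rw [← (g.domRestrict P).finrank_range_add_finrank_ker, LinearMap.range_domRestrict,
    LinearMap.ker_domRestrict, ← Submodule.finrank_map_subtype_eq, Submodule.map_comap_subtype]

variable {ι : Type*} {M : ι → Type*} [∀ i, AddCommGroup (M i)] [∀ i, Module K (M i)]

def Submodule.piUnivEquiv (p : ∀ i, Submodule K (M i)) :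
    Submodule.pi Set.univ p ≃ₗ[K] ∀ i, p i where
  toFun x i := ⟨x.1 i, x.2 i trivial⟩
  invFun y := ⟨fun i => y i, fun i _ => (y i).2⟩
  map_add' _ _ := rfl
  map_smul' _ _ := rfl
  left_inv _ := rfl
  right_inv _ := rfl

instance [Finite ι] (p : ∀ i, Submodule K (M i)) [∀ i, FiniteDimensional K (p i)] :
    FiniteDimensional K (Submodule.pi Set.univ p) :=
  (Submodule.piUnivEquiv p).symm.finiteDimensional

theorem Submodule.finrank_pi_univ [Fintype ι] (p : ∀ i, Submodule K (M i))
    [∀ i, FiniteDimensional K (p i)] :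
    Module.finrank K (Submodule.pi Set.univ p) = ∑ i, Module.finrank K (p i) := by
  rw [(Submodule.piUnivEquiv p).finrank_eq, Module.finrank_pi_fintype]

end LinearAlgebra

namespace MvPolynomial

section HomogeneousComponent

variable {σ R ι : Type*} [CommSemiring R]

theorem homogeneousComponent_mul_of_isHomogeneous_right {c v : MvPolynomial σ R} {e m : ℕ}
    (hv : v.IsHomogeneous e) (he : e ≤ m) :
    homogeneousComponent m (c * v) = homogeneousComponent (m - e) c * v := by
  have := DirectSum.coe_decompose_mul_of_right_mem_of_le (homogeneousSubmodule σ R) (a := c)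
    ((mem_homogeneousSubmodule e v).2 hv) he
  simpa only [DirectSum.decompose, Equiv.coe_fn_mk, decomposition.decompose'_apply] using this

theorem homogeneousComponent_sum_mul_of_isHomogeneous [Fintype ι] (c v : ι → MvPolynomial σ R)
    {e : ι → ℕ} {m : ℕ} (hv : ∀ j, (v j).IsHomogeneous (e j)) (he : ∀ j, e j ≤ m) :
    homogeneousComponent m (∑ j, c j * v j) = ∑ j, homogeneousComponent (m - e j) (c j) * v j := by
  simp only [map_sum, homogeneousComponent_mul_of_isHomogeneous_right (hv _) (he _)]

end HomogeneousComponent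

section HomogeneousDimension

variable (σ K : Type*) [Field K]

def degreeEqEquivSym [DecidableEq σ] (n : ℕ) : {d : σ →₀ ℕ | d.degree = n} ≃ Sym σ n :=
  (Equiv.subtypeEquivRight fun _ => Iff.rfl).trans (Sym.equivNatSum σ n).symm

def homogeneousSubmoduleBasis (n : ℕ) :
    Module.Basis {d : σ →₀ ℕ | d.degree = n} K (homogeneousSubmodule σ K n) :=
  (basisRestrictSupport K _).map
    (LinearEquiv.ofEq _ _ (homogeneousSubmodule_eq_finsupp_supported σ K n).symm)

instance [Fintype σ] (n : ℕ) : Module.Finite K (homogeneousSubmodule σ K n) := by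
  classical
  have := Finite.of_equiv _ (degreeEqEquivSym σ n).symm
  exact Module.Finite.of_basis (homogeneousSubmoduleBasis σ K n)

theorem finrank_homogeneousSubmodule [Fintype σ] (n : ℕ) :
    Module.finrank K (homogeneousSubmodule σ K n) = (Fintype.card σ + n - 1).choose n := by
  classical
  rw [Module.finrank_eq_nat_card_basis (homogeneousSubmoduleBasis σ K n),
    Nat.card_congr (degreeEqEquivSym σ n), Nat.card_eq_fintype_card, Sym.card_sym_eq_choose]

end HomogeneousDimension

theorem two_mul_finrank_homogeneousSubmodule_fin_three (K : Type*) [Field K] (n : ℕ) :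
    2 * (Module.finrank K (homogeneousSubmodule (Fin 3) K n) : ℤ) = (n + 1) * (n + 2) := by
  have h := Nat.add_one_mul_choose_eq (n + 1) 1
  rw [Nat.choose_one_right] at h
  rw [finrank_homogeneousSubmodule, Fintype.card_fin, show 3 + n - 1 = n + 2 by omega,
    Nat.choose_symm_add]
  exact_mod_cast (by linarith : 2 * (n + 2).choose 2 = (n + 1) * (n + 2))

end MvPolynomial

theorem relMap_apply (f : S3) (ρ : Fin 3 → S3) : relMap f ρ = ∑ i, ρ i * pderiv i f := rfl

theorem relMap_eq_linearCombination (f : S3) :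
    relMap f = Fintype.linearCombination S3 fun i => pderiv i f :=
  LinearMap.ext fun ρ => by simp [relMap, Fintype.linearCombination_apply]

theorem jacobianIdeal_eq_range_relMap (f : S3) : jacobianIdeal f = LinearMap.range (relMap f) := by
  have : Set.range (fun i => pderiv i f) = {pderiv 0 f, pderiv 1 f, pderiv 2 f} := by
    ext; simp [Fin.exists_fin_succ, eq_comm]
  rw [jacobianIdeal, relMap_eq_linearCombination, Fintype.range_linearCombination, this]

theorem mem_ARgr_iff {f : S3} {m : ℕ} {ρ : Fin 3 → S3} :
    ρ ∈ ARgr f m ↔ ρ ∈ AR f ∧ IsHomogVec ρ m := by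
  simp [ARgr, AR, IsHomogVec, Submodule.mem_pi, mem_homogeneousSubmodule]

theorem milnorDim_add_finrank_inf_jacobianIdeal (f : S3) (k : ℕ) :
    milnorDim f k + Module.finrank ℂ
      ↥(homogeneousSubmodule (Fin 3) ℂ k ⊓ (jacobianIdeal f).restrictScalars ℂ) =
      Module.finrank ℂ (homogeneousSubmodule (Fin 3) ℂ k) := by
  have hker : LinearMap.ker (Ideal.Quotient.mkₐ ℂ (jacobianIdeal f)).toLinearMap =
      (jacobianIdeal f).restrictScalars ℂ := by
    ext; simp [Ideal.Quotient.eq_zero_iff_mem]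
  rw [milnorDim, ← hker, Submodule.finrank_map_add_finrank_inf_ker]

section Graded

variable {f : S3} {d : ℕ}

theorem relMap_homogeneousComponent (hf : f.IsHomogeneous d) (ρ : Fin 3 → S3) (m : ℕ) :
    relMap f (fun i => homogeneousComponent m (ρ i)) =
      homogeneousComponent (m + (d - 1)) (relMap f ρ) := by
  rw [relMap_apply, relMap_apply, homogeneousComponent_sum_mul_of_isHomogeneous _ _
    (fun _ => hf.pderiv) (fun _ => Nat.le_add_left _ _), Nat.add_sub_cancel]

theorem map_relMap_pi_homogeneousSubmodule (hf : f.IsHomogeneous d) (m : ℕ) :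
    (Submodule.pi Set.univ fun _ => homogeneousSubmodule (Fin 3) ℂ m).map
        ((relMap f).restrictScalars ℂ) =
      homogeneousSubmodule (Fin 3) ℂ (m + (d - 1)) ⊓ (jacobianIdeal f).restrictScalars ℂ := by
  apply le_antisymm
  · rintro _ ⟨ρ, hρ, rfl⟩
    refine ⟨IsHomogeneous.sum _ _ _ fun i _ => (hρ i trivial).mul hf.pderiv, ?_⟩
    rw [jacobianIdeal_eq_range_relMap]
    exact LinearMap.mem_range_self _ _
  · rintro g ⟨hg, hgJ⟩
    obtain ⟨ρ, rfl⟩ : g ∈ LinearMap.range (relMap f) := by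
      rwa [← jacobianIdeal_eq_range_relMap]
    refine ⟨fun i => homogeneousComponent m (ρ i), fun i _ => homogeneousComponent_mem _ _, ?_⟩
    rw [LinearMap.restrictScalars_apply, relMap_homogeneousComponent hf,
      homogeneousComponent_of_mem hg, if_pos rfl]

theorem finrank_inf_jacobianIdeal_add_arDim (hf : f.IsHomogeneous d) (m : ℕ) :
    Module.finrank ℂ
        ↥(homogeneousSubmodule (Fin 3) ℂ (m + (d - 1)) ⊓ (jacobianIdeal f).restrictScalars ℂ) +
      arDim f m = 3 * Module.finrank ℂ (homogeneousSubmodule (Fin 3) ℂ m) := by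
  rw [← map_relMap_pi_homogeneousSubmodule hf, arDim, ARgr, inf_comm,
    Submodule.finrank_map_add_finrank_inf_ker, Submodule.finrank_pi_univ]
  simp

theorem milnorDim_add_three_mul_finrank (hf : f.IsHomogeneous d) (m : ℕ) :
    milnorDim f (m + (d - 1)) + 3 * Module.finrank ℂ (homogeneousSubmodule (Fin 3) ℂ m) =
      Module.finrank ℂ (homogeneousSubmodule (Fin 3) ℂ (m + (d - 1))) + arDim f m := by
  have := milnorDim_add_finrank_inf_jacobianIdeal f (m + (d - 1))
  have := finrank_inf_jacobianIdeal_add_arDim hf m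
  omega

end Graded

section Free

variable {f : S3} {ι : Type*} [Fintype ι] (b : Module.Basis ι S3 (AR f)) {e : ι → ℕ}

theorem basis_equivFun_symm_apply_apply (c : ι → S3) (i : Fin 3) :
    (b.equivFun.symm c : Fin 3 → S3) i = ∑ j, c j * (b j : Fin 3 → S3) i := by
  simp [Module.Basis.equivFun_symm_apply, Finset.sum_apply]

theorem ARgr_eq_map_of_basis (hb : ∀ j, IsHomogVec (b j) (e j)) {m : ℕ} (he : ∀ j, e j ≤ m) :
    ARgr f m = (Submodule.pi Set.univ fun j => homogeneousSubmodule (Fin 3) ℂ (m - e j)).map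
      (((AR f).subtype ∘ₗ b.equivFun.symm.toLinearMap).restrictScalars ℂ) := by
  apply le_antisymm
  · intro ρ hρ
    obtain ⟨hAR, hhom⟩ := mem_ARgr_iff.1 hρ
    set c := b.equivFun ⟨ρ, hAR⟩
    refine ⟨fun j => homogeneousComponent (m - e j) (c j),
      fun j _ => homogeneousComponent_mem _ _, funext fun i => ?_⟩
    have hρc : (b.equivFun.symm c : Fin 3 → S3) i = ρ i := by simp [c]
    simp only [LinearMap.restrictScalars_apply, LinearMap.comp_apply, LinearEquiv.coe_coe,
      Submodule.subtype_apply, basis_equivFun_symm_apply_apply]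
    rw [← homogeneousComponent_sum_mul_of_isHomogeneous _ _ (fun j => hb j i) he,
      ← basis_equivFun_symm_apply_apply, hρc, homogeneousComponent_of_mem (hhom i), if_pos rfl]
  · rintro _ ⟨c, hc, rfl⟩
    refine mem_ARgr_iff.2 ⟨(b.equivFun.symm c).2, fun i => ?_⟩
    simp only [LinearMap.restrictScalars_apply, LinearMap.comp_apply, LinearEquiv.coe_coe,
      Submodule.subtype_apply, basis_equivFun_symm_apply_apply]
    refine IsHomogeneous.sum _ _ _ fun j _ => ?_
    simpa only [Nat.sub_add_cancel (he j)] using (hc j trivial).mul (hb j i)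

theorem arDim_eq_sum_of_basis (hb : ∀ j, IsHomogVec (b j) (e j)) {m : ℕ} (he : ∀ j, e j ≤ m) :
    arDim f m = ∑ j, Module.finrank ℂ (homogeneousSubmodule (Fin 3) ℂ (m - e j)) := by
  have hinj : Function.Injective
      (((AR f).subtype ∘ₗ b.equivFun.symm.toLinearMap).restrictScalars ℂ) :=
    (AR f).injective_subtype.comp b.equivFun.symm.injective
  rw [arDim, ARgr_eq_map_of_basis b hb he,
    (Submodule.equivMapOfInjective _ hinj _).symm.finrank_eq, Submodule.finrank_pi_univ]

end Free

theorem two_mul_milnorDim_of_isFreeDivisorWith {f : S3} {d d₁ d₂ : ℕ} (hf : f.IsHomogeneous d)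
    (hfree : IsFreeDivisorWith f d₁ d₂) {m : ℕ} (h₁ : d₁ ≤ m) (h₂ : d₂ ≤ m) :
    2 * (milnorDim f (m + (d - 1)) : ℤ) =
      (m + ((d - 1 : ℕ) : ℤ) + 1) * (m + ((d - 1 : ℕ) : ℤ) + 2) +
        (m - d₁ + 1) * (m - d₁ + 2) + (m - d₂ + 1) * (m - d₂ + 2) - 3 * ((m + 1) * (m + 2)) := by
  obtain ⟨b, hb₀, hb₁⟩ := hfree
  have hAR := arDim_eq_sum_of_basis b (e := ![d₁, d₂]) (Fin.forall_fin_two.2 ⟨hb₀, hb₁⟩)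
    (m := m) (Fin.forall_fin_two.2 ⟨h₁, h₂⟩)
  have h := milnorDim_add_three_mul_finrank hf m
  rw [hAR, Fin.sum_univ_two, Matrix.cons_val_zero, Matrix.cons_val_one, Matrix.cons_val_zero] at h
  have hS := two_mul_finrank_homogeneousSubmodule_fin_three ℂ
  have hS₀ := hS (m + (d - 1))
  have hS₁ := hS (m - d₁)
  have hS₂ := hS (m - d₂)
  have hZ := congrArg (Nat.cast : ℕ → ℤ) h
  push_cast [h₁, h₂] at hS₀ hS₁ hS₂ hZ
  linear_combination 2 * hZ - 3 * hS m + hS₀ + hS₁ + hS₂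

theorem eq_add_and_eq_sq_sub_mul_of_two_mul_eq {τ e d₁ d₂ m : ℤ}
    (h₀ : 2 * τ = (m + e + 1) * (m + e + 2) + (m - d₁ + 1) * (m - d₁ + 2) +
      (m - d₂ + 1) * (m - d₂ + 2) - 3 * ((m + 1) * (m + 2)))
    (h₁ : 2 * τ = (m + 1 + e + 1) * (m + 1 + e + 2) + (m + 1 - d₁ + 1) * (m + 1 - d₁ + 2) +
      (m + 1 - d₂ + 1) * (m + 1 - d₂ + 2) - 3 * ((m + 1 + 1) * (m + 1 + 2))) :
    e = d₁ + d₂ ∧ τ = e ^ 2 - d₁ * d₂ := by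
  have he : e = d₁ + d₂ := by linarith
  refine ⟨he, ?_⟩
  subst he
  linarith

theorem stmt4_general (f : S3) (d : ℕ) (hf : f.IsHomogeneous d)
    (d₁ d₂ : ℕ) (hfree : IsFreeDivisorWith f d₁ d₂) (hpencil : 1 ≤ d₁)
    (τ : ℕ) (hτ : ∃ N : ℕ, ∀ k ≥ N, milnorDim f k = τ) :
    ((d₁ : ℤ) ^ 2 - ((d : ℤ) - 1) * d₁ + ((d : ℤ) - 1) ^ 2 - τ = 0) ∧
    ((d₂ : ℤ) ^ 2 - ((d : ℤ) - 1) * d₂ + ((d : ℤ) - 1) ^ 2 - τ = 0) ∧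
    d = d₁ + d₂ + 1 ∧ (τ : ℤ) = ((d : ℤ) - 1) ^ 2 - (d₁ : ℤ) * d₂ := by
  obtain ⟨N, hN⟩ := hτ
  have hstable (m : ℕ) (hm : N + d₁ + d₂ ≤ m) := by
    have h := two_mul_milnorDim_of_isFreeDivisorWith hf hfree (m := m) (by omega) (by omega)
    rwa [hN _ (by omega)] at h
  obtain ⟨he, hτd⟩ := eq_add_and_eq_sq_sub_mul_of_two_mul_eq (hstable _ le_rfl)
    (by exact_mod_cast hstable (N + d₁ + d₂ + 1) (by omega))
  have hd : d = d₁ + d₂ + 1 := by omega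
  subst hd
  push_cast at hτd ⊢
  exact ⟨by linear_combination -hτd, by linear_combination -hτd, rfl, by linear_combination hτd⟩

theorem stmt4 (f : S3) (d : ℕ) (hf : f.IsHomogeneous d) (hred : Squarefree f)
    (d₁ d₂ : ℕ) (hfree : IsFreeDivisorWith f d₁ d₂) (h12 : d₁ ≤ d₂) (hpencil : 1 ≤ d₁)
    (τ : ℕ) (hτ : ∃ N : ℕ, ∀ k ≥ N, milnorDim f k = τ) :
    ((d₁ : ℤ) ^ 2 - ((d : ℤ) - 1) * d₁ + ((d : ℤ) - 1) ^ 2 - τ = 0) ∧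
    ((d₂ : ℤ) ^ 2 - ((d : ℤ) - 1) * d₂ + ((d : ℤ) - 1) ^ 2 - τ = 0) ∧
    d = d₁ + d₂ + 1 ∧ (τ : ℤ) = ((d : ℤ) - 1) ^ 2 - (d₁ : ℤ) * d₂ :=
  stmt4_general f d hf d₁ d₂ hfree hpencil τ hτ

end
end

section
/- Let k ≥ 2 be an integer and f = (y^{k−1}z + x^k)²·y − x^{2k+1} ∈ ℂ[x,y,z]. Then the triples ρ_1 = (2x^k + 2y^{k−1}z, (4k+2)x^k − 4k·x^{k−1}y − (8k²−2)y^{k−1}z, 4k(k−1)x^{k−1}z + (8k³−4k²−2k+1)y^{k−2}z²) and ρ_2 = (0, −2y^k, x^k + (2k−1)y^{k−1}z) both satisfy a·f_x + b·f_y + c·f_z = 0 (so ρ_1, ρ_2 ∈ AR(f)_k), and ρ_1 and ρ_2 are linearly independent over S. -/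
open MvPolynomial

noncomputable section

/-!
With `g = y^(k-1) z + x^k` we have `f = g² y - x^(2k+1)`, so each partial derivative of `f` is a
short expression in `g`, and both relations reduce to polynomial identities; for instance
`ρ₂ · ∇f = 2 g y^k (x^k + y^(k-1) z - g) = 0`. Independence over the domain `S` is triangular:
`ρ₂` has first coordinate `0` while `ρ₁` does not, and `ρ₂ ≠ 0`.
-/

theorem LinearIndependent.pair_of_apply_ne_zero {R ι : Type*} [Ring R] [NoZeroDivisors R]
    {u v : ι → R} {i j : ι} (hui : u i ≠ 0) (hvi : v i = 0) (hvj : v j ≠ 0) :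
    LinearIndependent R ![u, v] := by
  refine LinearIndependent.pair_iff.mpr fun s t hst => ?_
  have hs : s = 0 := by
    simpa [hvi, hui] using congrFun hst i
  subst hs
  exact ⟨rfl, by simpa [hvj] using congrFun hst j⟩

theorem mem_AR_iff {f : S3} {ρ : Fin 3 → S3} : ρ ∈ AR f ↔ ∑ i, ρ i * pderiv i f = 0 :=
  Iff.rfl

def curveG (k : ℕ) : S3 := X 1 ^ (k - 1) * X 2 + X 0 ^ k

def curveF (k : ℕ) : S3 := curveG k ^ 2 * X 1 - X 0 ^ (2 * k + 1)

def syzygy₁ (k : ℕ) : Fin 3 → S3 :=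
  ![C 2 * X 0 ^ k + C 2 * X 1 ^ (k - 1) * X 2,
    C (4 * (k : ℂ) + 2) * X 0 ^ k - C (4 * (k : ℂ)) * X 0 ^ (k - 1) * X 1
      - C (8 * (k : ℂ) ^ 2 - 2) * X 1 ^ (k - 1) * X 2,
    C (4 * (k : ℂ) * ((k : ℂ) - 1)) * X 0 ^ (k - 1) * X 2
      + C (8 * (k : ℂ) ^ 3 - 4 * (k : ℂ) ^ 2 - 2 * (k : ℂ) + 1) * X 1 ^ (k - 2) * X 2 ^ 2]

def syzygy₂ (k : ℕ) : Fin 3 → S3 :=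
  ![0, C (-2 : ℂ) * X 1 ^ k, X 0 ^ k + C (2 * (k : ℂ) - 1) * X 1 ^ (k - 1) * X 2]

section Curve

variable {k : ℕ}

theorem pderiv_zero_curveF :
    pderiv 0 (curveF k) =
      2 * (k : S3) * X 0 ^ (k - 1) * X 1 * curveG k - (2 * (k : S3) + 1) * X 0 ^ (2 * k) := by
  simp only [curveF, curveG, map_sub, map_add, Derivation.leibniz, Derivation.leibniz_pow,
    pderiv_X_self, pderiv_X_of_ne, ne_eq, Fin.reduceEq, not_false_eq_true, smul_eq_mul,
    nsmul_eq_mul]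
  push_cast
  ring

theorem pderiv_one_curveF (hk : 1 ≤ k) :
    pderiv 1 (curveF k) =
      curveG k ^ 2 + 2 * ((k : S3) - 1) * X 1 ^ (k - 1) * X 2 * curveG k := by
  obtain ⟨m, rfl⟩ : ∃ m, k = m + 1 := ⟨k - 1, by omega⟩
  rcases m with _ | m <;>
  simp only [curveF, curveG, map_sub, map_add, Derivation.leibniz, Derivation.leibniz_pow,
    pderiv_X_self, pderiv_X_of_ne, ne_eq, Fin.reduceEq, not_false_eq_true, smul_eq_mul,
    nsmul_eq_mul] <;>
  push_cast <;>
  ring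

theorem pderiv_two_curveF (hk : 1 ≤ k) :
    pderiv 2 (curveF k) = 2 * X 1 ^ k * curveG k := by
  obtain ⟨m, rfl⟩ : ∃ m, k = m + 1 := ⟨k - 1, by omega⟩
  simp only [curveF, curveG, map_sub, map_add, Derivation.leibniz, Derivation.leibniz_pow,
    pderiv_X_self, pderiv_X_of_ne, ne_eq, Fin.reduceEq, not_false_eq_true, smul_eq_mul,
    nsmul_eq_mul]
  push_cast
  ring

-- For `k = 1` the exponent `k - 2` truncates to `0` and the relation fails.
theorem syzygy₁_mem_AR (hk : 2 ≤ k) : syzygy₁ k ∈ AR (curveF k) := by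
  rw [mem_AR_iff, Fin.sum_univ_three, pderiv_zero_curveF, pderiv_one_curveF (by omega),
    pderiv_two_curveF (by omega)]
  obtain ⟨m, rfl⟩ : ∃ m, k = m + 2 := ⟨k - 2, by omega⟩
  simp only [syzygy₁, curveG, Matrix.cons_val_zero, Matrix.cons_val_one, Matrix.cons_val_two,
    Matrix.head_cons, Matrix.tail_cons, map_ofNat, map_add, map_sub, map_mul, map_pow, map_natCast,
    map_one]
  push_cast
  ring

theorem syzygy₂_mem_AR (hk : 1 ≤ k) : syzygy₂ k ∈ AR (curveF k) := by
  rw [mem_AR_iff, Fin.sum_univ_three, pderiv_one_curveF hk, pderiv_two_curveF hk]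
  obtain ⟨m, rfl⟩ : ∃ m, k = m + 1 := ⟨k - 1, by omega⟩
  simp only [syzygy₂, curveG, Matrix.cons_val_zero, Matrix.cons_val_one, Matrix.cons_val_two,
    Matrix.head_cons, Matrix.tail_cons, map_ofNat, map_sub, map_mul, map_natCast, map_one, map_neg]
  push_cast
  ring

variable (k) in
theorem linearIndependent_syzygy₁_syzygy₂ :
    LinearIndependent S3 ![syzygy₁ k, syzygy₂ k] := by
  refine LinearIndependent.pair_of_apply_ne_zero (i := 0) (j := 1) ?_ rfl ?_
  · intro h
    simpa [syzygy₁] using congrArg (eval ![1, 0, 0]) h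
  · intro h
    simpa [syzygy₂] using congrArg (eval ![0, 1, 0]) h

end Curve

theorem stmt16 (k : ℕ) (hk : 2 ≤ k)
    (f : S3) (hf : f = (X 1 ^ (k - 1) * X 2 + X 0 ^ k) ^ 2 * X 1 - X 0 ^ (2 * k + 1))
    (ρ₁ ρ₂ : Fin 3 → S3)
    (h₁ : ρ₁ = ![C 2 * X 0 ^ k + C 2 * X 1 ^ (k - 1) * X 2,
      C (4 * (k : ℂ) + 2) * X 0 ^ k - C (4 * (k : ℂ)) * X 0 ^ (k - 1) * X 1
        - C (8 * (k : ℂ) ^ 2 - 2) * X 1 ^ (k - 1) * X 2,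
      C (4 * (k : ℂ) * ((k : ℂ) - 1)) * X 0 ^ (k - 1) * X 2
        + C (8 * (k : ℂ) ^ 3 - 4 * (k : ℂ) ^ 2 - 2 * (k : ℂ) + 1) * X 1 ^ (k - 2) * X 2 ^ 2])
    (h₂ : ρ₂ = ![0, C (-2 : ℂ) * X 1 ^ k,
      X 0 ^ k + C (2 * (k : ℂ) - 1) * X 1 ^ (k - 1) * X 2]) :
    (∑ i, ρ₁ i * pderiv i f = 0) ∧ (∑ i, ρ₂ i * pderiv i f = 0) ∧
      LinearIndependent S3 ![ρ₁, ρ₂] := by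
  subst hf h₁ h₂
  exact ⟨mem_AR_iff.mp (syzygy₁_mem_AR hk), mem_AR_iff.mp (syzygy₂_mem_AR (by omega)),
    linearIndependent_syzygy₁_syzygy₂ k⟩

end
end
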